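/- Let G = (V,E) be a directed graph with capacities c, with a flow instance (Δ,∇) and weights w : E → ℕ₊. Suppose there exists a (possibly fractional) feasible (Δ,∇)-flow f* with w(f*) ≤ |f*|·h. Then there exists an integral feasible (Δ,∇)-flow f with |f| ≥ (1/6)|f*| and w(f) ≤ 9h·|f|. -/

import Mathlib

open Finset

/-- Net flow leaving `v`: flow on out-edges minus flow on in-edges. -/
def fOut {V : Type*} [DecidableEq V] (E : Finset (V × V)) (f : V × V → ℚ) (v : V) : ℚ :=
  (∑ e ∈ E.filter (fun e => e.1 = v), f e) - ∑ e ∈ E.filter (fun e => e.2 = v), f e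

/-- Excess of `f` at `v`: `max{Δ(v) − f^out(v) − ∇(v), 0}`. -/
def exF {V : Type*} [DecidableEq V] (E : Finset (V × V)) (srcW sinkW : V → ℕ)
    (f : V × V → ℚ) (v : V) : ℚ :=
  max ((srcW v : ℚ) - fOut E f v - (sinkW v : ℚ)) 0

/-- Absorption of `f` at `v`: `min{Δ(v) − f^out(v), ∇(v)}`. -/
def absF {V : Type*} [DecidableEq V] (E : Finset (V × V)) (srcW sinkW : V → ℕ)
    (f : V × V → ℚ) (v : V) : ℚ :=
  min ((srcW v : ℚ) - fOut E f v) (sinkW v : ℚ)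

/-- Value `|f| = ∑_v abs_f(v)` of the flow. -/
def valF {V : Type*} [Fintype V] [DecidableEq V] (E : Finset (V × V)) (srcW sinkW : V → ℕ)
    (f : V × V → ℚ) : ℚ :=
  ∑ v, absF E srcW sinkW f v

/-- `f` is a `(Δ,∇)`-flow: nonnegative, supported on `E`, with `0 ≤ ex_f ≤ Δ`. -/
def IsFlow {V : Type*} [DecidableEq V] (E : Finset (V × V)) (srcW sinkW : V → ℕ)
    (f : V × V → ℚ) : Prop :=
  (∀ e, 0 ≤ f e) ∧ (∀ e, e ∉ E → f e = 0) ∧ ∀ v, exF E srcW sinkW f v ≤ (srcW v : ℚ)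

/-!
Let `g` maximize `Φ f = 9h·|f| - w(f)` over the finitely many integral feasible flows. Feasibility
and `Φ` are separable in the coordinates `f e` and `f^out v` of a flow: each coordinate ranges
over an interval with integer ends, and `Φ` is a sum of concave functions of the coordinates with
integer breakpoints. For a fractional feasible flow `f ≠ g`, the difference `f - g` contains a
conformal unit flow `m` along a cycle, or along a path between vertices where `f - g` has net
out-flows of opposite signs. Then `g + m` is integral and feasible, so `Φ (g + m) ≤ Φ g`, and by
concavity `Φ f - Φ (f - θ m) ≤ θ (Φ (g + m) - Φ g) ≤ 0`, where `θ` is the largest step keeping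
`f - θ m` between `f` and `g`; this step shrinks the support of `f - g`. Hence `Φ f* ≤ Φ g`, which
together with `w(f*) ≤ h|f*|` and `Φ g ≥ Φ 0 ≥ 0` gives `|g| ≥ 8|f*|/9` and `w(g) ≤ 9h|g|`.
For `h = 0` the flow `f*` vanishes on `E`, and the zero flow works.
-/

section Exchange

variable {ι : Type*}

/-- `m` is a `{0, ±1}`-vector whose nonzero entries have the signs of the entries of `x`. -/
def IsConformal (m x : ι → ℚ) : Prop :=
  ∀ i, m i = 0 ∨ (m i = 1 ∧ 0 < x i) ∨ (m i = -1 ∧ x i < 0)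

/-- `ψ` behaves like a concave function with integer breakpoints: a chord lying beyond an integer
`k` in the direction `σ = ±1` is no steeper than the unit chord from `k` to `k + σ`. -/
def IsIntegralConcave (ψ : ℚ → ℚ) : Prop :=
  ∀ (k : ℤ) (σ θ y : ℚ), (σ = 1 ∨ σ = -1) → 0 ≤ θ → θ ≤ σ * (y - k) →
    ψ y - ψ (y - θ * σ) ≤ θ * (ψ (k + σ) - ψ k)

lemma isIntegralConcave_const_mul (a : ℚ) : IsIntegralConcave (a * ·) :=
  fun _ _ _ _ _ _ _ => le_of_eq (by ring)

lemma IsIntegralConcave.const_mul {ψ : ℚ → ℚ} (hψ : IsIntegralConcave ψ) {a : ℚ} (ha : 0 ≤ a) :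
    IsIntegralConcave (fun y => a * ψ y) := by
  intro k σ θ y hσ hθ hy
  have := mul_le_mul_of_nonneg_left (hψ k σ θ y hσ hθ hy) ha
  linarith

lemma isIntegralConcave_min_sub (a b : ℤ) : IsIntegralConcave (fun y => min ((a : ℚ) - y) b) := by
  intro k σ θ y hσ hθ hy
  -- the slope is `0` left of the integer `a - b` and `-1` right of it
  have h1 : (a : ℚ) - b ≤ k ∨ (k : ℚ) + 1 ≤ a - b := by
    rcases le_or_gt (a - b) k with h | h
    · exact Or.inl (by exact_mod_cast h)
    · exact Or.inr (by exact_mod_cast Int.add_one_le_of_lt h)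
  have h2 : (a : ℚ) - b ≤ k - 1 ∨ (k : ℚ) ≤ a - b := by
    rcases le_or_gt (a - b) (k - 1) with h | h
    · exact Or.inl (by exact_mod_cast h)
    · exact Or.inr (by exact_mod_cast (show k ≤ a - b by omega))
  rcases hσ with rfl | rfl <;> simp only [min_def] <;> split_ifs <;>
    rcases h1 with h1 | h1 <;> rcases h2 with h2 | h2 <;> nlinarith

lemma exchange_coord {S : Set ℚ} (hS : S.OrdConnected)
    (hSint : ∀ y ∈ S, (⌊y⌋ : ℚ) ∈ S ∧ (⌈y⌉ : ℚ) ∈ S) {ψ : ℚ → ℚ} (hψ : IsIntegralConcave ψ)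
    {k : ℤ} {y μ θ : ℚ} (hk : (k : ℚ) ∈ S) (hy : y ∈ S)
    (hμ : μ = 0 ∨ (μ = 1 ∧ 0 < y - k) ∨ (μ = -1 ∧ y - k < 0))
    (hθ : 0 ≤ θ) (hθy : μ ≠ 0 → θ ≤ |y - k|) :
    y - θ * μ ∈ S ∧ k + μ ∈ S ∧ ψ y - ψ (y - θ * μ) ≤ θ * (ψ (k + μ) - ψ k) := by
  rcases hμ with rfl | ⟨rfl, hlt⟩ | ⟨rfl, hlt⟩
  · simpa using ⟨hy, hk⟩
  · have hθy := hθy one_ne_zero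
    rw [abs_of_pos hlt] at hθy
    have hceil : (k : ℚ) + 1 ≤ ⌈y⌉ := by exact_mod_cast Int.lt_ceil.2 (by linarith)
    refine ⟨hS.out hk hy ⟨by linarith, by linarith⟩,
      hS.out hk (hSint y hy).2 ⟨by linarith, hceil⟩,
      hψ k 1 θ y (Or.inl rfl) hθ (by linarith)⟩
  · have hθy := hθy (by norm_num)
    rw [abs_of_neg hlt] at hθy
    have hfloor : (⌊y⌋ : ℚ) ≤ k + -1 := by
      have : ⌊y⌋ < k := Int.floor_lt.2 (by linarith)
      exact_mod_cast (show ⌊y⌋ ≤ k + -1 by omega)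
    refine ⟨hS.out hy hk ⟨by linarith, by linarith⟩,
      hS.out (hSint y hy).1 hk ⟨hfloor, by linarith⟩,
      hψ k (-1) θ y (Or.inr rfl) hθ (by linarith)⟩

variable [Fintype ι]

lemma IsConformal.exists_step {m x : ι → ℚ} (hm : IsConformal m x) (hm0 : m ≠ 0) :
    ∃ θ > 0, (∀ i, m i ≠ 0 → θ ≤ |x i|) ∧ ∃ j, m j ≠ 0 ∧ θ = |x j| := by
  classical
  obtain ⟨j₀, hj₀⟩ := Function.ne_iff.1 hm0
  obtain ⟨j, hj, hjmin⟩ := (univ.filter fun i => m i ≠ 0).exists_min_image (fun i => |x i|)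
    ⟨j₀, by simpa using hj₀⟩
  simp only [mem_filter, mem_univ, true_and] at hj hjmin
  refine ⟨|x j|, abs_pos.2 ?_, hjmin, j, hj, rfl⟩
  rcases hm j with h | ⟨-, h⟩ | ⟨-, h⟩
  exacts [absurd h hj, h.ne', h.ne]

lemma IsConformal.card_sub_smul_lt [DecidableEq ι] {m x : ι → ℚ} (hm : IsConformal m x) {θ : ℚ}
    {j : ι} (hj : m j ≠ 0) (hθ : θ = |x j|) :
    #{i | x i - θ * m i ≠ 0} < #{i | x i ≠ 0} := by
  refine card_lt_card ⟨fun i hi => ?_, fun hsub => ?_⟩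
  · simp only [mem_filter, mem_univ, true_and] at hi ⊢
    rcases hm i with h | ⟨-, h⟩ | ⟨-, h⟩
    exacts [by simpa [h] using hi, h.ne', h.ne]
  · have := @hsub j
    simp only [mem_filter, mem_univ, true_and] at this
    rcases hm j with h | ⟨h1, h⟩ | ⟨h1, h⟩
    · exact hj h
    · exact this h.ne' (by rw [hθ, h1, abs_of_pos h]; ring)
    · exact this h.ne (by rw [hθ, h1, abs_of_neg h]; ring)

theorem sum_le_of_integral_max (A : Submodule ℚ (ι → ℚ)) {B : ι → Set ℚ}
    (hB : ∀ i, (B i).OrdConnected) (hBint : ∀ i, ∀ y ∈ B i, (⌊y⌋ : ℚ) ∈ B i ∧ (⌈y⌉ : ℚ) ∈ B i)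
    {ψ : ι → ℚ → ℚ} (hψ : ∀ i, IsIntegralConcave (ψ i))
    (hA : ∀ x ∈ A, x ≠ 0 → ∃ m ∈ A, m ≠ 0 ∧ IsConformal m x)
    {g : ι → ℚ} (hgA : g ∈ A) (hgB : ∀ i, g i ∈ B i) (hgint : ∀ i, ∃ k : ℤ, g i = k)
    (hgmax : ∀ g' ∈ A, (∀ i, g' i ∈ B i) → (∀ i, ∃ k : ℤ, g' i = k) →
      ∑ i, ψ i (g' i) ≤ ∑ i, ψ i (g i))
    {x : ι → ℚ} (hxA : x ∈ A) (hxB : ∀ i, x i ∈ B i) :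
    ∑ i, ψ i (x i) ≤ ∑ i, ψ i (g i) := by
  classical
  choose k hk using hgint
  induction hn : #{i | (x - g) i ≠ 0} using Nat.strong_induction_on generalizing x with
  | _ n ih =>
  rcases eq_or_ne x g with rfl | hxg
  · rfl
  obtain ⟨m, hmA, hm0, hm⟩ := hA (x - g) (A.sub_mem hxA hgA) (sub_ne_zero.2 hxg)
  obtain ⟨θ, hθ, hθle, j, hj, hθj⟩ := hm.exists_step hm0
  have hcoord i := exchange_coord (hB i) (hBint i) (hψ i) (hk i ▸ hgB i) (hxB i)
    (by simpa [hk i] using hm i) hθ.le (by simpa [hk i] using hθle i)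
  have hgm : ∑ i, ψ i ((g + m) i) ≤ ∑ i, ψ i (g i) := by
    refine hgmax _ (A.add_mem hgA hmA) (fun i => by simpa [hk i] using (hcoord i).2.1) fun i => ?_
    rcases hm i with h | ⟨h, -⟩ | ⟨h, -⟩
    exacts [⟨k i, by simp [h, hk i]⟩, ⟨k i + 1, by simp [h, hk i]⟩,
      ⟨k i - 1, by simp [h, hk i, sub_eq_add_neg]⟩]
  have hx' : ∑ i, ψ i ((x - θ • m) i) ≤ ∑ i, ψ i (g i) := by
    refine ih _ ?_ (A.sub_mem hxA (A.smul_mem θ hmA)) (fun i => by simpa using (hcoord i).1) rfl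
    rw [← hn]
    convert hm.card_sub_smul_lt hj hθj using 3
    simp only [Pi.sub_apply, Pi.smul_apply, smul_eq_mul]
    ring_nf
  have hsum : ∑ i, ψ i (x i) - ∑ i, ψ i ((x - θ • m) i)
      ≤ θ * (∑ i, ψ i ((g + m) i) - ∑ i, ψ i (g i)) := by
    simp only [← sum_sub_distrib, mul_sum]
    exact sum_le_sum fun i _ => by simpa [hk i] using (hcoord i).2.2
  have := mul_nonpos_of_nonneg_of_nonpos hθ.le (sub_nonpos.2 hgm)
  linarith

end Exchange

lemma List.exists_isChain_cons_nodup_of_relationTransGen {α : Type*} [DecidableEq α]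
    {r : α → α → Prop} {a b : α} (h : Relation.TransGen r a b) :
    ∃ l, List.IsChain r (a :: l) ∧ (a :: l).getLast (List.cons_ne_nil a l) = b ∧ l ≠ [] ∧
      l.Nodup := by
  induction h using Relation.TransGen.head_induction_on with
  | single hab => exact ⟨[b], by simpa using hab, rfl, by simp, by simp⟩
  | @head a c hac _ ih =>
    obtain ⟨l, hl, hlast, -, hnd⟩ := ih
    by_cases hc : c ∈ l
    · obtain ⟨s, t, rfl⟩ := List.append_of_mem hc
      refine ⟨c :: t, List.isChain_cons_cons.2 ⟨hac, hl.infix ?_⟩, ?_, by simp,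
        hnd.sublist (List.sublist_append_right _ _)⟩
      · exact (List.suffix_append (c :: s) (c :: t)).isInfix
      · simpa using hlast
    · exact ⟨c :: l, List.isChain_cons_cons.2 ⟨hac, hl⟩, by simpa using hlast, by simp,
        List.nodup_cons.2 ⟨hc, hnd⟩⟩

lemma List.sum_map_consecutivePairs_sub {α M : Type*} [AddCommGroup M] (φ : α → M) (a : α)
    (l : List α) : ((a :: l).consecutivePairs.map fun p => φ p.1 - φ p.2).sum
      = φ a - φ ((a :: l).getLast (List.cons_ne_nil a l)) := by
  induction l generalizing a with
  | nil => simp [List.consecutivePairs]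
  | cons b l ih =>
    simp only [List.consecutivePairs, List.tail_cons, List.zip_cons_cons, List.map_cons,
      List.sum_cons] at ih ⊢
    rw [ih, List.getLast_cons_cons]
    abel

lemma List.nodup_consecutivePairs_cons {α : Type*} {a : α} {l : List α} (hl : l.Nodup) :
    (a :: l).consecutivePairs.Nodup :=
  List.Nodup.of_map Prod.snd (by rwa [List.map_snd_zip (by simp)])

lemma List.IsChain.rel_of_mem_consecutivePairs {α : Type*} {r : α → α → Prop} {L : List α}
    (h : L.IsChain r) {p : α × α} (hp : p ∈ L.consecutivePairs) : r p.1 p.2 := by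
  induction h with
  | nil | singleton => simp [List.consecutivePairs] at hp
  | cons_cons hab _ ih =>
    simp only [List.consecutivePairs, List.tail_cons, List.zip_cons_cons, List.mem_cons] at hp ih
    rcases hp with rfl | hp
    exacts [hab, ih hp]

section Flow

variable {V : Type*} [DecidableEq V] (E : Finset (V × V))

/-- A flow together with its net out-flows: feasibility and the objective are separable in the
coordinates of this vector. -/
def flowExt : (V × V → ℚ) →ₗ[ℚ] (V × V) ⊕ V → ℚ where
  toFun f := Sum.elim f (fOut E f)
  map_add' f g := by
    ext (e | v)
    · rfl
    · simp only [fOut, Pi.add_apply, sum_add_distrib, Sum.elim_inr]; ring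
  map_smul' a f := by
    ext (e | v)
    · rfl
    · simp only [fOut, Pi.smul_apply, smul_eq_mul, ← mul_sum, Sum.elim_inr, RingHom.id_apply]
      ring

@[simp] lemma flowExt_inl (f : V × V → ℚ) (e : V × V) : flowExt E f (.inl e) = f e := rfl

@[simp] lemma flowExt_inr (f : V × V → ℚ) (v : V) : flowExt E f (.inr v) = fOut E f v := rfl

lemma fOut_single {e : V × V} (he : e ∈ E) (r : ℚ) (v : V) :
    fOut E (Pi.single e r) v = (if e.1 = v then r else 0) - (if e.2 = v then r else 0) := by
  simp [fOut, sum_pi_single', he]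

lemma fOut_single_of_notMem {e : V × V} (he : e ∉ E) (r : ℚ) (v : V) :
    fOut E (Pi.single e r) v = 0 := by
  simp [fOut, sum_pi_single', he]

lemma sum_fOut (R : Finset V) (x : V × V → ℚ) : ∑ v ∈ R, fOut E x v
    = ∑ e ∈ E, ((if e.1 ∈ R then x e else 0) - (if e.2 ∈ R then x e else 0)) := by
  simp only [fOut, sum_sub_distrib, sum_filter]
  rw [sum_comm, sum_comm (s := R)]
  simp [sum_ite_eq]

variable (x : V × V → ℚ)

/-- `x` carries flow from `a` to `b`, along the edge `(a, b)` or against the edge `(b, a)`. -/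
def Carries (a b : V) : Prop := 0 < x (a, b) ∨ x (b, a) < 0

variable {E x}

lemma cut_term_nonpos {R : Finset V} (hR : ∀ a b, a ∈ R → Carries x a b → b ∈ R) (e : V × V) :
    (if e.1 ∈ R then x e else 0) - (if e.2 ∈ R then x e else 0) ≤ 0 := by
  by_cases h1 : e.1 ∈ R <;> by_cases h2 : e.2 ∈ R <;> simp only [h1, h2, if_true, if_false]
  · simp
  · by_contra! h
    exact h2 (hR _ _ h1 (Or.inl (by simpa using h)))
  · by_contra! h
    exact h1 (hR _ _ h2 (Or.inr (by simpa using h)))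
  · simp

lemma sum_fOut_nonpos_of_closed {R : Finset V} (hR : ∀ a b, a ∈ R → Carries x a b → b ∈ R) :
    ∑ v ∈ R, fOut E x v ≤ 0 := by
  rw [sum_fOut]
  exact sum_nonpos fun e _ => cut_term_nonpos hR e

lemma sum_fOut_neg_of_closed (hsupp : ∀ e ∉ E, x e = 0) {R : Finset V}
    (hR : ∀ a b, a ∈ R → Carries x a b → b ∈ R) {a b : V} (hab : Carries x a b) (ha : a ∉ R)
    (hb : b ∈ R) : ∑ v ∈ R, fOut E x v < 0 := by
  have hE {e} (he : x e ≠ 0) : e ∈ E := by_contra fun h => he (hsupp e h)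
  rw [sum_fOut]
  refine (sum_lt_sum (g := fun _ => 0) (fun e _ => cut_term_nonpos hR e) ?_).trans_eq
    sum_const_zero
  rcases hab with h | h
  · exact ⟨(a, b), hE h.ne', by simp [ha, hb, h]⟩
  · exact ⟨(b, a), hE h.ne, by simp [ha, hb, h]⟩

variable (x) in
def flowArc (e : V × V) : V × V := if 0 < x e then e else e.swap

variable (x) in
/-- A unit of flow along the arc `p`, sent through the edge on which `x` carries flow along `p`. -/
def arcVec (p : V × V) : V × V → ℚ := if 0 < x p then Pi.single p 1 else Pi.single p.swap (-1)

lemma isConformal_arcVec {p : V × V} (hp : Carries x p.1 p.2) : IsConformal (arcVec x p) x := by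
  intro e
  unfold arcVec
  split_ifs with h
  · by_cases he : e = p
    · subst he; simp [h]
    · simp [he]
  · by_cases he : e = p.swap
    · subst he
      exact Or.inr (Or.inr ⟨by simp, hp.resolve_left h⟩)
    · simp [he]

lemma eq_flowArc_of_arcVec_ne_zero {p e : V × V} (hp : Carries x p.1 p.2)
    (he : arcVec x p e ≠ 0) : p = flowArc x e := by
  unfold arcVec at he
  unfold flowArc
  split_ifs at he with h
  · obtain rfl : e = p := by by_contra hne; simp [hne] at he
    simp [h]
  · obtain rfl : e = p.swap := by by_contra hne; simp [hne] at he
    have : x p.swap < 0 := hp.resolve_left h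
    simp [this.not_gt]

variable (x) in
lemma arcVec_flowArc_ne_zero (p : V × V) : arcVec x p (flowArc x p) ≠ 0 := by
  unfold arcVec flowArc
  split_ifs <;> simp

lemma fOut_arcVec (hsupp : ∀ e ∉ E, x e = 0) {p : V × V} (hp : Carries x p.1 p.2) (v : V) :
    fOut E (arcVec x p) v = (if p.1 = v then 1 else 0) - (if p.2 = v then 1 else 0) := by
  have hE {e} (he : x e ≠ 0) : e ∈ E := by_contra fun h => he (hsupp e h)
  by_cases h : 0 < x p
  · rw [arcVec, if_pos h]
    exact fOut_single E (hE h.ne') 1 v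
  · have hswap : x p.swap < 0 := hp.resolve_left h
    rw [arcVec, if_neg h, fOut_single E (hE hswap.ne) (-1) v]
    simp only [Prod.fst_swap, Prod.snd_swap]
    split_ifs <;> ring

variable (x) in
def walkVec (L : List V) : V × V → ℚ := ∑ p ∈ L.consecutivePairs.toFinset, arcVec x p

lemma walkVec_apply {L : List V} (hL : L.IsChain (Carries x)) (e : V × V) :
    walkVec x L e
      = if flowArc x e ∈ L.consecutivePairs then arcVec x (flowArc x e) e else 0 := by
  rw [walkVec, Finset.sum_apply]
  calc _ = ∑ p ∈ L.consecutivePairs.toFinset,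
        if p = flowArc x e then arcVec x (flowArc x e) e else 0 := by
        refine sum_congr rfl fun p hp => ?_
        have hp := hL.rel_of_mem_consecutivePairs (List.mem_toFinset.1 hp)
        by_cases he : arcVec x p e = 0
        · split_ifs with h <;> [rw [← h, he]; exact he]
        · simp [eq_flowArc_of_arcVec_ne_zero hp he]
    _ = _ := by simp [sum_ite_eq']

lemma isConformal_walkVec {L : List V} (hL : L.IsChain (Carries x)) :
    IsConformal (walkVec x L) x := by
  intro e
  rw [walkVec_apply hL]
  split_ifs with h
  · exact isConformal_arcVec (hL.rel_of_mem_consecutivePairs h) e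
  · exact Or.inl rfl

lemma walkVec_ne_zero {L : List V} (hL : L.IsChain (Carries x)) {p : V × V}
    (hpL : p ∈ L.consecutivePairs) : walkVec x L ≠ 0 := by
  have hp := hL.rel_of_mem_consecutivePairs hpL
  have hflow : flowArc x (flowArc x p) = p :=
    (eq_flowArc_of_arcVec_ne_zero hp (arcVec_flowArc_ne_zero x p)).symm
  refine Function.ne_iff.2 ⟨flowArc x p, ?_⟩
  rw [walkVec_apply hL, hflow, if_pos hpL]
  exact arcVec_flowArc_ne_zero x p

lemma fOut_walkVec (hsupp : ∀ e ∉ E, x e = 0) {a : V} {l : List V}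
    (hL : (a :: l).IsChain (Carries x)) (hl : l.Nodup) (v : V) :
    fOut E (walkVec x (a :: l)) v
      = (if a = v then 1 else 0)
        - (if (a :: l).getLast (List.cons_ne_nil a l) = v then 1 else 0) := by
  rw [← flowExt_inr, walkVec, map_sum, Finset.sum_apply]
  simp only [flowExt_inr]
  rw [sum_congr rfl fun p hp => fOut_arcVec hsupp (hL.rel_of_mem_consecutivePairs
    (List.mem_toFinset.1 hp)) v, List.sum_toFinset _ (List.nodup_consecutivePairs_cons hl)]
  exact List.sum_map_consecutivePairs_sub (fun u => if u = v then (1 : ℚ) else 0) a l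

variable [Fintype V]

lemma exists_reflTransGen_fOut_neg {u : V} (hu : 0 < fOut E x u) :
    ∃ t, Relation.ReflTransGen (Carries x) u t ∧ fOut E x t < 0 := by
  classical
  by_contra! h
  have hle := sum_fOut_nonpos_of_closed (E := E)
    (R := univ.filter (Relation.ReflTransGen (Carries x) u))
    (by simpa using fun _ _ ha hab => ha.tail hab)
  have := single_le_sum (f := fun v => fOut E x v) (fun v hv => h v (by simpa using hv))
    (mem_filter.2 ⟨mem_univ u, Relation.ReflTransGen.refl⟩)
  linarith

lemma reflTransGen_of_carries (hsupp : ∀ e ∉ E, x e = 0) (h0 : ∀ v, fOut E x v = 0) {a b : V}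
    (hab : Carries x a b) : Relation.ReflTransGen (Carries x) b a := by
  classical
  by_contra ha
  have := sum_fOut_neg_of_closed hsupp (R := univ.filter (Relation.ReflTransGen (Carries x) b))
    (by simpa using fun _ _ ha hab => ha.tail hab) hab (by simpa using ha)
    (mem_filter.2 ⟨mem_univ b, Relation.ReflTransGen.refl⟩)
  simp [h0] at this

lemma exists_carries_walk (hsupp : ∀ e ∉ E, x e = 0) (hx : x ≠ 0) :
    ∃ a l, (a :: l).IsChain (Carries x) ∧ l ≠ [] ∧ l.Nodup ∧
      ((a :: l).getLast (List.cons_ne_nil a l) = a ∨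
        0 < fOut E x a ∧ fOut E x ((a :: l).getLast (List.cons_ne_nil a l)) < 0) := by
  by_cases hpos : ∃ u, 0 < fOut E x u
  · obtain ⟨u, hu⟩ := hpos
    obtain ⟨t, hut, ht⟩ := exists_reflTransGen_fOut_neg hu
    have htu : t ≠ u := by rintro rfl; linarith
    obtain ⟨l, hl, hlast, hl0, hnd⟩ := List.exists_isChain_cons_nodup_of_relationTransGen
      ((Relation.reflTransGen_iff_eq_or_transGen.1 hut).resolve_left htu)
    exact ⟨u, l, hl, hl0, hnd, Or.inr ⟨hu, hlast ▸ ht⟩⟩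
  · push Not at hpos
    have h0 : ∀ v, fOut E x v = 0 := by
      have hsum : ∑ v, fOut E x v = 0 := by simp [sum_fOut]
      exact fun v => (sum_eq_zero_iff_of_nonpos fun v _ => hpos v).1 hsum v (mem_univ v)
    obtain ⟨e, hxe⟩ := Function.ne_iff.1 hx
    obtain ⟨a, b, hab⟩ : ∃ a b, Carries x a b := by
      rcases (hxe : x e ≠ 0).lt_or_gt with h | h
      · exact ⟨e.2, e.1, Or.inr h⟩
      · exact ⟨e.1, e.2, Or.inl h⟩
    obtain ⟨l, hl, hlast, hl0, hnd⟩ := List.exists_isChain_cons_nodup_of_relationTransGen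
      (Relation.TransGen.head' hab (reflTransGen_of_carries hsupp h0 hab))
    exact ⟨a, l, hl, hl0, hnd, Or.inl hlast⟩

/-- The elementary vector is the unit flow along a cycle, or along a path from a vertex of
positive to one of negative net out-flow, in the digraph of `Carries x`; if `x` does not vanish
off `E`, a single edge outside `E` will do. -/
lemma exists_isConformal_flowExt {x : V × V → ℚ} (hx : x ≠ 0) :
    ∃ m, m ≠ 0 ∧ IsConformal (flowExt E m) (flowExt E x) := by
  by_cases hsupp : ∀ e ∉ E, x e = 0
  · obtain ⟨a, l, hL, hl0, hnd, hends⟩ := exists_carries_walk hsupp hx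
    obtain ⟨b, l', rfl⟩ := List.exists_cons_of_ne_nil hl0
    refine ⟨walkVec x (a :: b :: l'),
      walkVec_ne_zero hL (p := (a, b)) (by simp [List.consecutivePairs]), ?_⟩
    rintro (e | v)
    · exact isConformal_walkVec hL e
    · simp only [flowExt_inr, fOut_walkVec hsupp hL hnd]
      rcases hends with h | ⟨ha, ht⟩
      · simp [h]
      · set t := (a :: b :: l').getLast (List.cons_ne_nil a (b :: l'))
        have hat : a ≠ t := by rintro h; rw [← h] at ht; linarith
        split_ifs with h1 h2 h2
        · exact absurd (h1.trans h2.symm) hat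
        · subst h1; exact Or.inr (Or.inl ⟨by norm_num, ha⟩)
        · subst h2; exact Or.inr (Or.inr ⟨by norm_num, ht⟩)
        · simp
  · push Not at hsupp
    obtain ⟨e, he, hxe⟩ := hsupp
    refine ⟨Pi.single e (if 0 < x e then 1 else -1), Function.ne_iff.2 ⟨e, by split_ifs <;> simp⟩,
      ?_⟩
    rintro (e' | v)
    · by_cases h : e' = e
      · subst h
        by_cases hpos : 0 < x e'
        · simp [hpos]
        · simpa [hpos] using lt_of_le_of_ne (not_lt.1 hpos) hxe
      · simp [h]
    · simp [fOut_single_of_notMem E he]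

lemma exists_isConformal_of_mem_range {X : (V × V) ⊕ V → ℚ}
    (hX : X ∈ LinearMap.range (flowExt E)) (hX0 : X ≠ 0) :
    ∃ M ∈ LinearMap.range (flowExt E), M ≠ 0 ∧ IsConformal M X := by
  obtain ⟨x, rfl⟩ := hX
  obtain ⟨m, hm0, hm⟩ := exists_isConformal_flowExt (E := E) (x := x) (by rintro rfl; simp at hX0)
  exact ⟨flowExt E m, ⟨m, rfl⟩, fun h => hm0 (funext fun e => by simpa using congr_fun h (.inl e)),
    hm⟩

end Flow

section FlowProblem

variable {V : Type*} [DecidableEq V] (E : Finset (V × V)) (c : V × V → ℕ)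
  (srcW sinkW : V → ℕ) (w : V × V → ℕ) (a : ℚ)

def flowBounds : (V × V) ⊕ V → Set ℚ :=
  Sum.elim (fun e => Set.Icc 0 ((if e ∈ E then c e else 0 : ℕ) : ℚ))
    (fun v => Set.Ici (-(sinkW v : ℚ)))

lemma exF_le_iff (f : V × V → ℚ) (v : V) :
    exF E srcW sinkW f v ≤ srcW v ↔ -(sinkW v : ℚ) ≤ fOut E f v := by
  simp only [exF, max_le_iff, Nat.cast_nonneg, and_true]
  constructor <;> intro <;> linarith

lemma isFlow_zero : IsFlow E srcW sinkW (fun _ => 0) :=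
  ⟨fun _ => le_rfl, fun _ _ => rfl, fun v => (exF_le_iff E srcW sinkW _ v).2 (by simp [fOut])⟩

lemma isFlow_and_le_iff (f : V × V → ℚ) :
    (IsFlow E srcW sinkW f ∧ ∀ e ∈ E, f e ≤ c e) ↔
      ∀ i, flowExt E f i ∈ flowBounds E c sinkW i := by
  simp only [IsFlow, exF_le_iff]
  constructor
  · rintro ⟨⟨h0, hE, hv⟩, hc⟩ (e | v)
    · by_cases he : e ∈ E
      · simpa [flowBounds, he] using ⟨h0 e, hc e he⟩
      · simp [flowBounds, he, hE e he]
    · simpa [flowBounds] using hv v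
  · intro h
    refine ⟨⟨fun e => (h (.inl e)).1, fun e he => ?_,
      fun v => by simpa [flowBounds] using h (.inr v)⟩,
      fun e he => by simpa [flowBounds, he] using (h (.inl e)).2⟩
    have := h (.inl e)
    simp only [flowBounds, flowExt_inl, Sum.elim_inl, he, if_false, Nat.cast_zero] at this
    exact le_antisymm this.2 this.1

lemma ordConnected_flowBounds (i : (V × V) ⊕ V) : (flowBounds E c sinkW i).OrdConnected := by
  cases i <;> simp only [flowBounds, Sum.elim_inl, Sum.elim_inr] <;> infer_instance

lemma floor_ceil_mem_flowBounds (i : (V × V) ⊕ V) {y : ℚ} (hy : y ∈ flowBounds E c sinkW i) :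
    (⌊y⌋ : ℚ) ∈ flowBounds E c sinkW i ∧ (⌈y⌉ : ℚ) ∈ flowBounds E c sinkW i := by
  cases i with
  | inl e =>
    obtain ⟨h0, h1⟩ := hy
    refine ⟨⟨by exact_mod_cast Int.floor_nonneg.2 h0, (Int.floor_le y).trans h1⟩,
      ⟨h0.trans (Int.le_ceil y), ?_⟩⟩
    exact_mod_cast Int.ceil_le.2 (by exact_mod_cast h1)
  | inr v =>
    have hy : -(sinkW v : ℚ) ≤ y := hy
    refine ⟨?_, hy.trans (Int.le_ceil y)⟩
    show -(sinkW v : ℚ) ≤ ⌊y⌋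
    exact_mod_cast Int.le_floor.2 (by exact_mod_cast hy)

def flowObjectiveTerm : (V × V) ⊕ V → ℚ → ℚ :=
  Sum.elim (fun e y => -((if e ∈ E then w e else 0 : ℕ) : ℚ) * y)
    (fun v y => a * min ((srcW v : ℚ) - y) (sinkW v))

lemma isIntegralConcave_flowObjectiveTerm (ha : 0 ≤ a) (i : (V × V) ⊕ V) :
    IsIntegralConcave (flowObjectiveTerm E srcW sinkW w a i) := by
  cases i with
  | inl e => exact isIntegralConcave_const_mul _
  | inr v =>
    simpa [flowObjectiveTerm] using (isIntegralConcave_min_sub (srcW v) (sinkW v)).const_mul ha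

lemma flowExt_natCast_integral (g : V × V → ℕ) (i : (V × V) ⊕ V) :
    ∃ k : ℤ, flowExt E (fun e => (g e : ℚ)) i = k := by
  cases i with
  | inl e => exact ⟨g e, by simp⟩
  | inr v =>
    refine ⟨(∑ e ∈ E.filter (·.1 = v), (g e : ℤ)) - ∑ e ∈ E.filter (·.2 = v), (g e : ℤ), ?_⟩
    simp [fOut]

lemma exists_natCast_eq_of_integral {X : (V × V) ⊕ V → ℚ} (hX : X ∈ LinearMap.range (flowExt E))
    (hXB : ∀ i, X i ∈ flowBounds E c sinkW i) (hXint : ∀ i, ∃ k : ℤ, X i = k) :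
    ∃ g : V × V → ℕ, flowExt E (fun e => (g e : ℚ)) = X := by
  obtain ⟨x, rfl⟩ := hX
  choose k hk using hXint
  refine ⟨fun e => (k (.inl e)).toNat, congrArg _ (funext fun e => ?_)⟩
  have hx := hk (.inl e)
  have h0 : 0 ≤ k (.inl e) := by exact_mod_cast hx ▸ (hXB (.inl e)).1
  simp only [flowExt_inl] at hx
  rw [hx]
  exact_mod_cast Int.toNat_of_nonneg h0

variable [Fintype V]

lemma valF_congr {f g : V × V → ℚ} (hfg : ∀ e ∈ E, f e = g e) :
    valF E srcW sinkW f = valF E srcW sinkW g := by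
  have hOut v : fOut E f v = fOut E g v := by
    simp only [fOut]
    congr 1 <;> exact sum_congr rfl fun e he => hfg e (mem_filter.1 he).1
  simp only [valF, absF, hOut]

lemma valF_zero_nonneg : 0 ≤ valF E srcW sinkW (fun _ => 0) :=
  sum_nonneg fun v _ => by simp [absF, fOut]

def flowObjective (f : V × V → ℚ) : ℚ := a * valF E srcW sinkW f - ∑ e ∈ E, (w e : ℚ) * f e

lemma flowObjective_eq_sum (f : V × V → ℚ) : flowObjective E srcW sinkW w a f
    = ∑ i, flowObjectiveTerm E srcW sinkW w a i (flowExt E f i) := by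
  simp [flowObjective, flowObjectiveTerm, Fintype.sum_sum_type, valF, absF, mul_sum, ite_mul,
    sum_ite_mem]
  ring

lemma finite_setOf_integral_flow : {g : V × V → ℕ |
    IsFlow E srcW sinkW (fun e => (g e : ℚ)) ∧ ∀ e ∈ E, (g e : ℚ) ≤ c e}.Finite := by
  refine (Set.Finite.pi (t := fun e => Set.Iic (c e)) fun e => Set.finite_Iic _).subset ?_
  rintro g ⟨hg, hgc⟩ e -
  by_cases he : e ∈ E
  · exact_mod_cast hgc e he
  · have : (g e : ℚ) = 0 := hg.2.1 e he
    have : g e = 0 := by exact_mod_cast this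
    simp [this]

theorem exists_integral_flowObjective_ge (ha : 0 ≤ a) :
    ∃ g : V × V → ℕ, (IsFlow E srcW sinkW (fun e => (g e : ℚ)) ∧ ∀ e ∈ E, (g e : ℚ) ≤ c e) ∧
      ∀ f, IsFlow E srcW sinkW f → (∀ e ∈ E, f e ≤ c e) →
        flowObjective E srcW sinkW w a f ≤ flowObjective E srcW sinkW w a (fun e => (g e : ℚ)) := by
  obtain ⟨g, hg, hgmax⟩ := Set.exists_max_image _
    (fun g => flowObjective E srcW sinkW w a (fun e => (g e : ℚ)))
    (finite_setOf_integral_flow E c srcW sinkW)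
    ⟨0, by simpa using isFlow_zero E srcW sinkW, by simp⟩
  refine ⟨g, hg, fun f hf hfc => ?_⟩
  rw [flowObjective_eq_sum, flowObjective_eq_sum]
  refine sum_le_of_integral_max (LinearMap.range (flowExt E)) (ordConnected_flowBounds E c sinkW)
    (fun i y => floor_ceil_mem_flowBounds E c sinkW i)
    (isIntegralConcave_flowObjectiveTerm E srcW sinkW w a ha)
    (fun X => exists_isConformal_of_mem_range) ⟨_, rfl⟩
    ((isFlow_and_le_iff E c srcW sinkW _).1 hg) (flowExt_natCast_integral E g) ?_ ⟨f, rfl⟩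
    ((isFlow_and_le_iff E c srcW sinkW f).1 ⟨hf, hfc⟩)
  intro X hXA hXB hXint
  obtain ⟨g', rfl⟩ := exists_natCast_eq_of_integral E c sinkW hXA hXB hXint
  rw [← flowObjective_eq_sum, ← flowObjective_eq_sum]
  exact hgmax g' ((isFlow_and_le_iff E c srcW sinkW _).2 hXB)

end FlowProblem

/-- If there is a (possibly fractional) feasible `(Δ,∇)`-flow `f*` with
`w(f*) ≤ |f*|·h`, then there is an *integral* feasible `(Δ,∇)`-flow `f` with
`|f| ≥ (1/6)·|f*|` and `w(f) ≤ 9h·|f|`. -/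
theorem stmt_9 {V : Type*} [Fintype V] [DecidableEq V]
    (E : Finset (V × V)) (c : V × V → ℕ) (srcW sinkW : V → ℕ)
    (w : V × V → ℕ) (hw : ∀ e ∈ E, 1 ≤ w e) (h : ℕ)
    (fstar : V × V → ℚ)
    (hfstar : IsFlow E srcW sinkW fstar)
    (hfstarFeas : ∀ e ∈ E, fstar e ≤ (c e : ℚ))
    (hfstarShort : ∑ e ∈ E, (w e : ℚ) * fstar e ≤ valF E srcW sinkW fstar * (h : ℚ)) :
    ∃ f : V × V → ℕ,
      IsFlow E srcW sinkW (fun e => (f e : ℚ)) ∧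
      (∀ e ∈ E, f e ≤ c e) ∧
      (1 / 6) * valF E srcW sinkW fstar ≤ valF E srcW sinkW (fun e => (f e : ℚ)) ∧
      ∑ e ∈ E, (w e : ℚ) * (f e : ℚ) ≤
        9 * (h : ℚ) * valF E srcW sinkW (fun e => (f e : ℚ)) := by
  have hweight {f : V × V → ℚ} (hf : ∀ e, 0 ≤ f e) : 0 ≤ ∑ e ∈ E, (w e : ℚ) * f e :=
    sum_nonneg fun e _ => mul_nonneg (Nat.cast_nonneg _) (hf e)
  rcases Nat.eq_zero_or_pos h with rfl | hh
  · have hstar : ∀ e ∈ E, fstar e = 0 := by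
      have hsum := (sum_eq_zero_iff_of_nonneg fun e _ => mul_nonneg (Nat.cast_nonneg _)
        (hfstar.1 e)).1 (le_antisymm (by simpa using hfstarShort) (hweight hfstar.1))
      intro e he
      have hwe : (w e : ℚ) ≠ 0 := Nat.cast_ne_zero.2 (by have := hw e he; omega)
      exact (mul_eq_zero.1 (hsum e he)).resolve_left hwe
    refine ⟨0, by simpa using isFlow_zero E srcW sinkW, fun _ _ => Nat.zero_le _, ?_, by simp⟩
    have := valF_zero_nonneg E srcW sinkW
    simp only [Pi.zero_apply, Nat.cast_zero, valF_congr E srcW sinkW hstar]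
    linarith
  · obtain ⟨g, ⟨hg, hgc⟩, hmax⟩ :=
      exists_integral_flowObjective_ge E c srcW sinkW w (9 * h) (by positivity)
    have hstar := hmax fstar hfstar hfstarFeas
    have hzero := hmax (fun _ => 0) (isFlow_zero E srcW sinkW) (by simp)
    have hval0 := valF_zero_nonneg E srcW sinkW
    have hwg := hweight fun e => Nat.cast_nonneg (g e)
    have hwstar := hweight hfstar.1
    have hh' : (0 : ℚ) < h := by exact_mod_cast hh
    simp only [flowObjective, mul_zero, sum_const_zero, sub_zero] at hstar hzero
    refine ⟨g, hg, fun e he => by exact_mod_cast hgc e he, ?_, by linarith⟩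
    have hF : 0 ≤ valF E srcW sinkW fstar := le_of_mul_le_mul_right (by linarith) hh'
    have h89 : 8 * valF E srcW sinkW fstar ≤ 9 * valF E srcW sinkW (fun e => (g e : ℚ)) :=
      le_of_mul_le_mul_left (by linarith) hh'
    linarith
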